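/- arXiv:2010.03830 — 5 statements merged into one kernel-verified Lean document; each statement's English description precedes it below -/
import Mathlib

section
/- If (r₀, s₀) is a rational point on the conic s² + 2r² = 4, then the point (2r₀², 2r₀²s₀) lies on the elliptic curve y² = x(x-4)(x-4r₀²). -/
theorem stmt_3 (r₀ s₀ : ℚ) (h : s₀^2 + 2*r₀^2 = 4) :
    (2*r₀^2*s₀)^2 = (2*r₀^2) * (2*r₀^2 - 4) * (2*r₀^2 - 4*r₀^2) := by
  linear_combination (4*r₀^4) * h
end

section
/- For rational r ≠ 0, the map (x,y) ↦ (s,t) = ((x-r⁴)/y, r²(x-1)/y) sends any rational point (x,y) with y ≠ 0 on the Weierstrass curve y² = x(x-1)(x-r⁴) to a rational point on the twisted Huff curve t(s²+1) = r²·s(t²+1). -/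
theorem huff_eq_of_weierstrass_eq {K : Type*} [Field K] {r x y : K} (hy : y ≠ 0)
    (h : y ^ 2 = x * (x - 1) * (x - r ^ 4)) :
    (r ^ 2 * (x - 1) / y) * (((x - r ^ 4) / y) ^ 2 + 1) =
      r ^ 2 * ((x - r ^ 4) / y) * ((r ^ 2 * (x - 1) / y) ^ 2 + 1) := by
  field_simp
  linear_combination r ^ 2 * (r ^ 4 - 1) * h

theorem stmt_5_general (r : ℚ) (x y : ℚ) (hy : y ≠ 0)
    (h : y^2 = x*(x-1)*(x-r^4)) :
    (r^2*(x-1)/y) * (((x-r^4)/y)^2 + 1) =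
      r^2 * ((x-r^4)/y) * ((r^2*(x-1)/y)^2 + 1) :=
  huff_eq_of_weierstrass_eq hy h

theorem stmt_5 (r : ℚ) (hr : r ≠ 0) (x y : ℚ) (hy : y ≠ 0)
    (h : y^2 = x*(x-1)*(x-r^4)) :
    (r^2*(x-1)/y) * (((x-r^4)/y)^2 + 1) =
      r^2 * ((x-r^4)/y) * ((r^2*(x-1)/y)^2 + 1) :=
  stmt_5_general r x y hy h
end

section
/- Suppose s, t ∈ ℚ are nonzero and there exists H ∈ ℚ with t²(s²+1)⁴ - 4s⁴(t²+1)² = H². Let r = (2s/(1+s²))·((1+t²)/(2t)) and u = 2s/(1+s²). Then there exist rationals f, g, h such that (u/r, f), (u, g), (ur, h) all lie on the unit circle x² + y² = 1. -/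
/-!
The middle point comes from the rational parametrisation `m ↦ (2m/(1+m²), (1-m²)/(1+m²))` of the
circle at `m = s`, and since `u ≠ 0` the first abscissa `u/r` is `2t/(1+t²)`, the same
parametrisation at `m = t`. For the last point, clearing denominators shows
`1 - (ur)² = (t²(s²+1)⁴ - 4s⁴(t²+1)²) / (t(1+s²)²)²`, a square by hypothesis.
-/

section

variable {K : Type*} [Field K] [LinearOrder K] [IsStrictOrderedRing K]

theorem circle_param_sq_add_sq (m : K) :
    (2 * m / (1 + m ^ 2)) ^ 2 + ((1 - m ^ 2) / (1 + m ^ 2)) ^ 2 = 1 := by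
  have : (1 : K) + m ^ 2 ≠ 0 := by positivity
  field_simp
  ring

theorem circle_param_ne_zero {m : K} (hm : m ≠ 0) : 2 * m / (1 + m ^ 2) ≠ 0 := by
  have : (1 : K) + m ^ 2 ≠ 0 := by positivity
  exact div_ne_zero (mul_ne_zero two_ne_zero hm) this

theorem sq_mul_add_sq_eq_one_of_sq_eq {s t H : K} (ht : t ≠ 0)
    (hH : t ^ 2 * (s ^ 2 + 1) ^ 4 - 4 * s ^ 4 * (t ^ 2 + 1) ^ 2 = H ^ 2) :
    (2 * s / (1 + s ^ 2) * (2 * s / (1 + s ^ 2) * ((1 + t ^ 2) / (2 * t)))) ^ 2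
      + (H / (t * (1 + s ^ 2) ^ 2)) ^ 2 = 1 := by
  have : (1 : K) + s ^ 2 ≠ 0 := by positivity
  field_simp
  linear_combination (-1) * hH

end

theorem stmt_9 (s t : ℚ) (hs : s ≠ 0) (ht : t ≠ 0)
    (h : ∃ H : ℚ, t^2*(s^2+1)^4 - 4*s^4*(t^2+1)^2 = H^2) :
    let r := (2*s/(1+s^2)) * ((1+t^2)/(2*t))
    let u := 2*s/(1+s^2)
    ∃ f g h' : ℚ, (u/r)^2 + f^2 = 1 ∧ u^2 + g^2 = 1 ∧ (u*r)^2 + h'^2 = 1 := by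
  obtain ⟨H, hH⟩ := h
  intro r u
  have hur : u / r = 2 * t / (1 + t ^ 2) := by
    rw [div_mul_cancel_left₀ (circle_param_ne_zero hs), inv_div]
  refine ⟨(1 - t ^ 2) / (1 + t ^ 2), (1 - s ^ 2) / (1 + s ^ 2), H / (t * (1 + s ^ 2) ^ 2),
    ?_, circle_param_sq_add_sq s, sq_mul_add_sq_eq_one_of_sq_eq ht hH⟩
  rw [hur]
  exact circle_param_sq_add_sq t
end

section
/- If s ∈ ℚ satisfies that s⁴ - 2s³ + 6s² - 2s + 1 is a square of a rational number, then x = 8s³(1+s²) is the x-coordinate of a rational point on the curve y² = x(x + 16s⁴)(x + (1+s²)⁴); that is, 8s³(1+s²)·(8s³(1+s²) + 16s⁴)·(8s³(1+s²) + (1+s²)⁴) is a rational square. -/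
theorem stmt_12 (s : ℚ) (h : ∃ w : ℚ, w^2 = s^4 - 2*s^3 + 6*s^2 - 2*s + 1) :
    ∃ y : ℚ, y^2 = (8*s^3*(1+s^2)) * (8*s^3*(1+s^2) + 16*s^4) *
      (8*s^3*(1+s^2) + (1+s^2)^4) := by
  obtain ⟨w, hw⟩ := h
  exact ⟨8*s^3*(1+s)^2*(1+s^2)*w, by rw [show (8*s^3*(1+s)^2*(1+s^2)*w)^2 = (8*s^3*(1+s)^2*(1+s^2))^2 * w^2 by ring, hw]; ring⟩
end

section
/- There exist infinitely many rational numbers x₁ such that both x₁ and (5/4)²·x₁ are x-coordinates of rational points on the unit circle x² + y² = 1. -/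
/-!
A rational `λ ≠ 0` with `λ² - 16²` and `λ² - 25²` both squares gives `x = 16 / λ`, because then
`1 - x² = (λ² - 16²) / λ²` and `1 - ((5/4)² x)² = (λ² - 25²) / λ²`.  Such `λ` come from the
elliptic curve `E : Y² = X (X - 16²) (X - 25²)`: the `X`-coordinate of `2P` is `λ²` with
`λ = (X² - 16² 25²) / (2Y)`, and `λ² - 16²`, `λ² - 25²` are squares as well.  Starting from a point
`P₀` with `|X(P₀)|₂ > 1`, each doubling multiplies `|X|₂` by `4`, so the points `2ⁿ P₀` are pairwise
distinct and give infinitely many `λ`.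
-/

open Function

def OnCurve (a b : ℚ) (P : ℚ × ℚ) : Prop :=
  P.2 ^ 2 = P.1 * (P.1 - a) * (P.1 - b)

def tangentSlope (a b : ℚ) (P : ℚ × ℚ) : ℚ :=
  (3 * P.1 ^ 2 - 2 * (a + b) * P.1 + a * b) / (2 * P.2)

def curveDouble (a b : ℚ) (P : ℚ × ℚ) : ℚ × ℚ :=
  (tangentSlope a b P ^ 2 + a + b - 2 * P.1,
    tangentSlope a b P * (P.1 - (tangentSlope a b P ^ 2 + a + b - 2 * P.1)) - P.2)

def doubleXSqrt (a b : ℚ) (P : ℚ × ℚ) : ℚ :=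
  (P.1 ^ 2 - a * b) / (2 * P.2)

section Doubling

variable {a b : ℚ} {P : ℚ × ℚ}

theorem tangentSlope_mul (a b : ℚ) (hY : P.2 ≠ 0) :
    tangentSlope a b P * (2 * P.2) = 3 * P.1 ^ 2 - 2 * (a + b) * P.1 + a * b :=
  div_mul_cancel₀ _ (mul_ne_zero two_ne_zero hY)

theorem doubleXSqrt_mul (a b : ℚ) (hY : P.2 ≠ 0) :
    doubleXSqrt a b P * (2 * P.2) = P.1 ^ 2 - a * b :=
  div_mul_cancel₀ _ (mul_ne_zero two_ne_zero hY)

theorem onCurve_curveDouble (hP : OnCurve a b P) (hY : P.2 ≠ 0) :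
    OnCurve a b (curveDouble a b P) := by
  unfold OnCurve curveDouble at *
  -- With `f T = T (T - a) (T - b)`, `f T - (Y + L (T - X))² - (T - X)² (T - X')` is linear in `T`
  -- and, modulo `hP` and `tangentSlope_mul`, vanishes to order 2 at `T = X`.
  linear_combination hP + (tangentSlope a b P ^ 2 + a + b - 3 * P.1) * tangentSlope_mul a b hY

theorem curveDouble_fst (hP : OnCurve a b P) (hY : P.2 ≠ 0) :
    (curveDouble a b P).1 = doubleXSqrt a b P ^ 2 := by
  unfold OnCurve curveDouble at *
  refine mul_left_cancel₀ (pow_ne_zero 2 (mul_ne_zero two_ne_zero hY)) ?_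
  linear_combination
    (tangentSlope a b P * (2 * P.2) + 3 * P.1 ^ 2 - 2 * (a + b) * P.1 + a * b) *
      tangentSlope_mul a b hY
    - (doubleXSqrt a b P * (2 * P.2) + P.1 ^ 2 - a * b) * doubleXSqrt_mul a b hY
    + 4 * (a + b - 2 * P.1) * hP

theorem doubleXSqrt_sq_sub_left (hP : OnCurve a b P) (hY : P.2 ≠ 0) :
    doubleXSqrt a b P ^ 2 - a = ((P.1 ^ 2 - 2 * a * P.1 + a * b) / (2 * P.2)) ^ 2 := by
  unfold OnCurve at hP
  unfold doubleXSqrt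
  field_simp
  linear_combination (-4 * a) * hP

theorem doubleXSqrt_sq_sub_right (hP : OnCurve a b P) (hY : P.2 ≠ 0) :
    doubleXSqrt a b P ^ 2 - b = ((P.1 ^ 2 - 2 * b * P.1 + a * b) / (2 * P.2)) ^ 2 := by
  unfold OnCurve at hP
  unfold doubleXSqrt
  field_simp
  linear_combination (-4 * b) * hP

end Doubling

section PAdic

variable {p : ℕ} [Fact p.Prime] {a b : ℚ} {P : ℚ × ℚ}

theorem padicNorm_add_eq_left_of_lt {q r : ℚ} (h : padicNorm p r < padicNorm p q) :
    padicNorm p (q + r) = padicNorm p q := by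
  rw [padicNorm.add_eq_max_of_ne h.ne', max_eq_left h.le]

theorem padicNorm_sub_eq_left_of_le_one_lt {q r : ℚ} (hr : padicNorm p r ≤ 1)
    (hq : 1 < padicNorm p q) : padicNorm p (q - r) = padicNorm p q := by
  rw [sub_eq_add_neg]
  exact padicNorm_add_eq_left_of_lt (by rw [padicNorm.neg]; linarith)

theorem padicNorm_snd_sq (ha : padicNorm p a ≤ 1) (hb : padicNorm p b ≤ 1) (hP : OnCurve a b P)
    (hX : 1 < padicNorm p P.1) : padicNorm p P.2 ^ 2 = padicNorm p P.1 ^ 3 := by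
  rw [← IsAbsoluteValue.abv_pow (padicNorm p), hP, padicNorm.mul, padicNorm.mul,
    padicNorm_sub_eq_left_of_le_one_lt ha hX, padicNorm_sub_eq_left_of_le_one_lt hb hX]
  ring

theorem snd_ne_zero_of_one_lt_padicNorm (ha : padicNorm p a ≤ 1) (hb : padicNorm p b ≤ 1)
    (hP : OnCurve a b P) (hX : 1 < padicNorm p P.1) : P.2 ≠ 0 := by
  intro hY
  have := padicNorm_snd_sq ha hb hP hX
  rw [hY, padicNorm.zero, zero_pow two_ne_zero] at this
  exact (pow_pos (one_pos.trans hX) 3).ne this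

theorem padicNorm_sq_sub_mul (ha : padicNorm p a ≤ 1) (hb : padicNorm p b ≤ 1)
    (hX : 1 < padicNorm p P.1) : padicNorm p (P.1 ^ 2 - a * b) = padicNorm p P.1 ^ 2 := by
  rw [← IsAbsoluteValue.abv_pow (padicNorm p)]
  refine padicNorm_sub_eq_left_of_le_one_lt ?_ ?_
  · rw [padicNorm.mul]; nlinarith [padicNorm.nonneg (p := p) a]
  · rw [IsAbsoluteValue.abv_pow (padicNorm p)]; nlinarith

theorem doubleXSqrt_ne_zero (ha : padicNorm p a ≤ 1) (hb : padicNorm p b ≤ 1)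
    (hP : OnCurve a b P) (hX : 1 < padicNorm p P.1) : doubleXSqrt a b P ≠ 0 := by
  refine div_ne_zero (fun h => ?_)
    (mul_ne_zero two_ne_zero (snd_ne_zero_of_one_lt_padicNorm ha hb hP hX))
  have := padicNorm_sq_sub_mul ha hb hX
  rw [h, padicNorm.zero] at this
  nlinarith

theorem padicNorm_curveDouble_fst (ha : padicNorm p a ≤ 1) (hb : padicNorm p b ≤ 1)
    (hP : OnCurve a b P) (hX : 1 < padicNorm p P.1) :
    padicNorm p (curveDouble a b P).1 = padicNorm p P.1 / padicNorm p 4 := by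
  have hY := snd_ne_zero_of_one_lt_padicNorm ha hb hP hX
  have hY2 := padicNorm_snd_sq ha hb hP hX
  rw [curveDouble_fst hP hY, doubleXSqrt, IsAbsoluteValue.abv_pow (padicNorm p), padicNorm.div,
    padicNorm_sq_sub_mul ha hb hX, padicNorm.mul, show (4 : ℚ) = 2 ^ 2 by norm_num,
    IsAbsoluteValue.abv_pow (padicNorm p)]
  have h2 : padicNorm p 2 ≠ 0 := padicNorm.nonzero two_ne_zero
  have hX0 : padicNorm p P.1 ≠ 0 := by positivity
  rw [div_pow, mul_pow, hY2]
  field_simp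

end PAdic

section TwoAdic

variable {a b : ℚ} {P : ℚ × ℚ}

theorem padicNorm_two_curveDouble_fst (ha : padicNorm 2 a ≤ 1) (hb : padicNorm 2 b ≤ 1)
    (hP : OnCurve a b P) (hX : 1 < padicNorm 2 P.1) :
    padicNorm 2 (curveDouble a b P).1 = 4 * padicNorm 2 P.1 := by
  rw [padicNorm_curveDouble_fst ha hb hP hX, show (4 : ℚ) = (2 : ℕ) ^ 2 by norm_num,
    IsAbsoluteValue.abv_pow (padicNorm 2), padicNorm.padicNorm_p_of_prime]
  norm_num
  ring

theorem onCurve_iterate_curveDouble (ha : padicNorm 2 a ≤ 1) (hb : padicNorm 2 b ≤ 1)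
    (hP : OnCurve a b P) (hX : 1 < padicNorm 2 P.1) (n : ℕ) :
    OnCurve a b ((curveDouble a b)^[n] P) ∧ 1 < padicNorm 2 ((curveDouble a b)^[n] P).1 := by
  induction n with
  | zero => exact ⟨hP, hX⟩
  | succ n ih =>
    obtain ⟨hQ, hQX⟩ := ih
    rw [iterate_succ_apply', padicNorm_two_curveDouble_fst ha hb hQ hQX]
    exact ⟨onCurve_curveDouble hQ (snd_ne_zero_of_one_lt_padicNorm ha hb hQ hQX), by linarith⟩

theorem injective_doubleXSqrt_iterate (ha : padicNorm 2 a ≤ 1) (hb : padicNorm 2 b ≤ 1)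
    (hP : OnCurve a b P) (hX : 1 < padicNorm 2 P.1) :
    Injective fun n => doubleXSqrt a b ((curveDouble a b)^[n] P) := by
  have hmono : StrictMono fun n => padicNorm 2 ((curveDouble a b)^[n] P).1 := by
    refine strictMono_nat_of_lt_succ fun n => ?_
    obtain ⟨hQ, hQX⟩ := onCurve_iterate_curveDouble ha hb hP hX n
    rw [iterate_succ_apply', padicNorm_two_curveDouble_fst ha hb hQ hQX]
    linarith
  have hsq (n : ℕ) :
      doubleXSqrt a b ((curveDouble a b)^[n] P) ^ 2 = ((curveDouble a b)^[n + 1] P).1 := by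
    obtain ⟨hQ, hQX⟩ := onCurve_iterate_curveDouble ha hb hP hX n
    rw [iterate_succ_apply', curveDouble_fst hQ (snd_ne_zero_of_one_lt_padicNorm ha hb hQ hQX)]
  intro m n h
  have := congrArg (padicNorm 2) ((hsq m).symm.trans ((congrArg (· ^ 2) h).trans (hsq n)))
  exact Nat.succ_injective (hmono.injective this)

end TwoAdic

theorem div_sq_add_div_sq_eq_one {u l s : ℚ} (hl : l ≠ 0) (hs : l ^ 2 - u ^ 2 = s ^ 2) :
    (u / l) ^ 2 + (s / l) ^ 2 = 1 := by
  field_simp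
  linear_combination -hs

theorem stmt_16 :
    {x₁ : ℚ | (∃ y : ℚ, x₁^2 + y^2 = 1) ∧
      (∃ y : ℚ, ((5/4:ℚ)^2 * x₁)^2 + y^2 = 1)}.Infinite := by
  -- `P₀ = 2 (65², 245700)`
  set P₀ : ℚ × ℚ := (6181890625 / 4769856, 313300730909375 / 10417365504)
  have ha : padicNorm 2 (16 ^ 2 : ℚ) ≤ 1 := by exact_mod_cast padicNorm.of_nat (p := 2) (16 ^ 2)
  have hb : padicNorm 2 (25 ^ 2 : ℚ) ≤ 1 := by exact_mod_cast padicNorm.of_nat (p := 2) (25 ^ 2)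
  have hP₀ : OnCurve (16 ^ 2) (25 ^ 2) P₀ := by norm_num [OnCurve, P₀]
  have hX₀ : 1 < padicNorm 2 P₀.1 := by
    rw [show P₀.1 = ((6181890625 : ℕ) : ℚ) / ((2 : ℕ) ^ 6 * ((74529 : ℕ) : ℚ)) by norm_num [P₀],
      padicNorm.div, padicNorm.mul, IsAbsoluteValue.abv_pow (padicNorm 2),
      padicNorm.padicNorm_p_of_prime, (padicNorm.nat_eq_one_iff _).2 (by norm_num),
      (padicNorm.nat_eq_one_iff _).2 (by norm_num)]
    norm_num
  set l := fun n => doubleXSqrt (16 ^ 2) (25 ^ 2) ((curveDouble (16 ^ 2) (25 ^ 2))^[n] P₀)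
  refine Set.infinite_of_injective_forall_mem (f := fun n => 16 / l n) ?_ fun n => ?_
  · intro m n h
    exact injective_doubleXSqrt_iterate ha hb hP₀ hX₀ (by simpa [l, div_eq_mul_inv] using h)
  obtain ⟨hQ, hQX⟩ := onCurve_iterate_curveDouble ha hb hP₀ hX₀ n
  have hY := snd_ne_zero_of_one_lt_padicNorm ha hb hQ hQX
  have hl : l n ≠ 0 := doubleXSqrt_ne_zero ha hb hQ hQX
  refine ⟨⟨_, div_sq_add_div_sq_eq_one hl (doubleXSqrt_sq_sub_left hQ hY)⟩, ?_⟩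
  rw [show (5 / 4 : ℚ) ^ 2 * (16 / l n) = 25 / l n by ring]
  exact ⟨_, div_sq_add_div_sq_eq_one hl (doubleXSqrt_sq_sub_right hQ hY)⟩
end
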